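/- Let (A,C,ι) be a DG open Frobenius-like algebra, with • and * on A⊗̂Ω̂(C) as above. Then for all α,β,γ: (α•β)*γ = α•(β*γ) + (-1)^{|β|(|γ|+1)}(α*γ)•β. That is, the operation (−)*γ is a graded derivation of the product • (exactly, at chain level, from the right input). -/

import Mathlib

/-!
Expand both sides on basis elements `α = x⊗[al]`, `β = y⊗[bl]`, `γ = z⊗[cl]`. Since
`α•β = ± xy⊗[al|bl]`, the contractions of `γ` into `α•β` split into those hitting a letter of `bl`,
which are term by term those of `α•(β*γ)` with the same sign, and those hitting a letter `aᵢ` of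
`al`, which are those of `(α*γ)•β`. In the second family the Koszul signs agree up to
`(-1)^{|β|(|γ|+1)}` because `ε(aᵢz)` vanishes unless `deg aᵢ = -deg z`.
-/

noncomputable section

/-- Degree of a bar word `[a₁|⋯|aₙ]`, each letter contributing `deg aᵢ − 1`. -/
def wdeg {Cb : Type*} (degC : Cb → ℤ) (l : List Cb) : ℤ :=
  (l.map (fun a => degC a - 1)).sum

section WordDegree

variable {Cb : Type*} (degC : Cb → ℤ)

lemma wdeg_append (l m : List Cb) : wdeg degC (l ++ m) = wdeg degC l + wdeg degC m := by
  simp [wdeg]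

lemma wdeg_eq_take_add_getElem_add_drop (l : List Cb) {i : ℕ} (hi : i < l.length) :
    wdeg degC l = wdeg degC (l.take i) + (degC l[i] - 1) + wdeg degC (l.drop (i + 1)) := by
  conv_lhs => rw [← List.take_append_drop i l, ← List.getElem_cons_drop hi]
  rw [wdeg_append]
  simp only [wdeg, List.map_cons, List.sum_cons, add_assoc]

end WordDegree

lemma neg_one_zpow_eq_of_even_sub {α : Type*} [DivisionRing α] {a b : ℤ} (h : Even (a - b)) :
    (-1 : α) ^ a = (-1) ^ b := by
  rw [← sub_add_cancel a b, zpow_add₀ (neg_ne_zero.2 one_ne_zero), h.neg_one_zpow, one_mul]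

/-- The Koszul signs for contracting `z⊗[cl]` into a letter of degree `-z` of `x⊗[al]`, where
`t`, `d`, `b`, `c` are the word degrees of the part of `al` before and after that letter, of `bl`
and of `cl`, and `y = deg y`. -/
lemma neg_one_zpow_contract_left_sign {α : Type*} [Field α] (y z t c d b : ℤ) (p : α) :
    (-1 : α) ^ (y * (t + (-z - 1) + d)) * ((-1) ^ (z + (z + c - 1) * (d + b)) * p) =
      (-1) ^ ((y + b) * (z + c + 1)) *
        ((-1) ^ (z + (z + c - 1) * d) * p * (-1) ^ (y * (t + (c + d)))) := by
  have h : (-1 : α) ≠ 0 := neg_ne_zero.2 one_ne_zero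
  calc _ = (-1 : α) ^ (y * (t + (-z - 1) + d) + (z + (z + c - 1) * (d + b))) * p := by
        rw [← mul_assoc, ← zpow_add₀ h]
    _ = (-1) ^ ((y + b) * (z + c + 1) + (z + (z + c - 1) * d) + y * (t + (c + d))) * p := by
        congr 1
        exact neg_one_zpow_eq_of_even_sub ⟨-(y * z) - y - y * c - b, by ring⟩
    _ = _ := by rw [zpow_add₀ h, zpow_add₀ h]; ring

lemma star_finsuppSum_smul_single_left {k Ab Cb : Type*} [Field k] {degA : Ab → ℤ} {degC : Cb → ℤ} {pair : Cb → Ab → k}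
    {star : ((Ab × List Cb) →₀ k) →ₗ[k] ((Ab × List Cb) →₀ k) →ₗ[k] ((Ab × List Cb) →₀ k)}
    (hstar : ∀ (x : Ab) (l : List Cb) (y : Ab) (m : List Cb),
      star (Finsupp.single (x, l) 1) (Finsupp.single (y, m) 1) =
        ∑ i : Fin l.length,
          (((-1 : k) ^ (degA y +
              (degA y + wdeg degC m - 1) * wdeg degC (l.drop (i.1 + 1)))) *
            pair (l.get i) y) •
            Finsupp.single (x, l.take i.1 ++ m ++ l.drop (i.1 + 1)) (1 : k))
    (f : Ab →₀ k) (l : List Cb) (z : Ab) (m : List Cb) :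
    star (f.sum fun w c => c • Finsupp.single (w, l) 1) (Finsupp.single (z, m) 1) =
      ∑ i : Fin l.length,
        (((-1 : k) ^ (degA z + (degA z + wdeg degC m - 1) * wdeg degC (l.drop (i.1 + 1)))) *
          pair (l.get i) z) •
          f.sum fun w c => c • Finsupp.single (w, l.take i.1 ++ m ++ l.drop (i.1 + 1)) 1 := by
  simp only [Finsupp.sum, map_sum, LinearMap.sum_apply, map_smul, LinearMap.smul_apply, hstar,
    Finset.smul_sum]
  rw [Finset.sum_comm]
  exact Finset.sum_congr rfl fun i _ => Finset.sum_congr rfl fun w _ => smul_comm _ _ _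

theorem star_right_derivation_of_loop_product_general
    {k : Type*} [Field k] (Ab Cb : Type*)
    (degA : Ab → ℤ) (degC : Cb → ℤ)
    (pair : Cb → Ab → k)  -- the pairing ε(a·y)
    (hpair_deg : ∀ a y, pair a y ≠ 0 → degC a + degA y = 0)
    (mulA : Ab → Ab → (Ab →₀ k))
    (mul star :
      ((Ab × List Cb) →₀ k) →ₗ[k] ((Ab × List Cb) →₀ k) →ₗ[k] ((Ab × List Cb) →₀ k))
    (hmul : ∀ (x : Ab) (l : List Cb) (y : Ab) (m : List Cb),
      mul (Finsupp.single (x, l) 1) (Finsupp.single (y, m) 1) =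
        ((-1 : k) ^ (degA y * wdeg degC l)) •
          (mulA x y).sum (fun z c => c • Finsupp.single (z, l ++ m) (1 : k)))
    (hstar : ∀ (x : Ab) (l : List Cb) (y : Ab) (m : List Cb),
      star (Finsupp.single (x, l) 1) (Finsupp.single (y, m) 1) =
        ∑ i : Fin l.length,
          (((-1 : k) ^ (degA y +
              (degA y + wdeg degC m - 1) * wdeg degC (l.drop (i.1 + 1)))) *
            pair (l.get i) y) •
            Finsupp.single (x, l.take i.1 ++ m ++ l.drop (i.1 + 1)) (1 : k)) :
    ∀ (x : Ab) (al : List Cb) (y : Ab) (bl : List Cb) (z : Ab) (cl : List Cb),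
      star (mul (Finsupp.single (x, al) 1) (Finsupp.single (y, bl) 1))
          (Finsupp.single (z, cl) 1) =
        mul (Finsupp.single (x, al) 1)
          (star (Finsupp.single (y, bl) 1) (Finsupp.single (z, cl) 1)) +
        ((-1 : k) ^ ((degA y + wdeg degC bl) * (degA z + wdeg degC cl + 1))) •
          mul (star (Finsupp.single (x, al) 1) (Finsupp.single (z, cl) 1))
            (Finsupp.single (y, bl) 1) := by
  intro x al y bl z cl
  rw [hmul, map_smul, LinearMap.smul_apply, star_finsuppSum_smul_single_left hstar,
    ← Fin.sum_congr' _ (List.length_append (as := al) (bs := bl)).symm, Fin.sum_univ_add,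
    smul_add, add_comm, hstar y bl z cl, hstar x al z cl]
  simp only [map_sum, map_smul, LinearMap.sum_apply, LinearMap.smul_apply, hmul, Finset.smul_sum]
  congr 1
  · refine Finset.sum_congr rfl fun j _ => ?_
    simp only [Fin.val_cast, Fin.val_natAdd, List.get_eq_getElem, add_assoc,
      List.take_length_add_append, List.drop_length_add_append,
      List.getElem_append_right (Nat.le_add_right al.length j.1),
      Nat.add_sub_cancel_left, List.append_assoc, smul_smul]
    congr 1
    ring
  · refine Finset.sum_congr rfl fun i _ => ?_
    have hi : i.1 < al.length := i.isLt
    simp only [Fin.val_cast, Fin.val_castAdd, List.get_eq_getElem,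
      List.getElem_append_left hi, List.take_append_of_le_length hi.le,
      List.drop_append_of_le_length hi, List.append_assoc, smul_smul, wdeg_append]
    congr 1
    by_cases hp : pair al[i.1] z = 0
    · simp [hp]
    have hdeg : degC al[i.1] = -degA z := by linarith [hpair_deg _ _ hp]
    rw [wdeg_eq_take_add_getElem_add_drop degC al hi, hdeg]
    exact neg_one_zpow_contract_left_sign _ _ _ _ _ _ _

/-- For a DG open Frobenius-like algebra `(A,C,ι)`, with the
loop product `•` and the star operation `*` on `A⊗̂Ω̂(C)`, one has the exact
chain-level derivation identity (Lemma 4.5 (1))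
`(α•β)*γ = α•(β*γ) + (-1)^{|β|(|γ|+1)} (α*γ)•β`. -/
theorem star_right_derivation_of_loop_product
    {k : Type*} [Field k] (Ab Cb : Type*)
    (degA : Ab → ℤ) (degC : Cb → ℤ)
    (pair : Cb → Ab → k)  -- the pairing ε(a·y)
    (hpair_deg : ∀ a y, pair a y ≠ 0 → degC a + degA y = 0)
    (mulA : Ab → Ab → (Ab →₀ k))
    (hmulA_deg : ∀ x y z, z ∈ (mulA x y).support → degA z = degA x + degA y)
    (mul star :
      ((Ab × List Cb) →₀ k) →ₗ[k] ((Ab × List Cb) →₀ k) →ₗ[k] ((Ab × List Cb) →₀ k))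
    (hmul : ∀ (x : Ab) (l : List Cb) (y : Ab) (m : List Cb),
      mul (Finsupp.single (x, l) 1) (Finsupp.single (y, m) 1) =
        ((-1 : k) ^ (degA y * wdeg degC l)) •
          (mulA x y).sum (fun z c => c • Finsupp.single (z, l ++ m) (1 : k)))
    (hstar : ∀ (x : Ab) (l : List Cb) (y : Ab) (m : List Cb),
      star (Finsupp.single (x, l) 1) (Finsupp.single (y, m) 1) =
        ∑ i : Fin l.length,
          (((-1 : k) ^ (degA y +
              (degA y + wdeg degC m - 1) * wdeg degC (l.drop (i.1 + 1)))) *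
            pair (l.get i) y) •
            Finsupp.single (x, l.take i.1 ++ m ++ l.drop (i.1 + 1)) (1 : k)) :
    ∀ (x : Ab) (al : List Cb) (y : Ab) (bl : List Cb) (z : Ab) (cl : List Cb),
      star (mul (Finsupp.single (x, al) 1) (Finsupp.single (y, bl) 1))
          (Finsupp.single (z, cl) 1) =
        mul (Finsupp.single (x, al) 1)
          (star (Finsupp.single (y, bl) 1) (Finsupp.single (z, cl) 1)) +
        ((-1 : k) ^ ((degA y + wdeg degC bl) * (degA z + wdeg degC cl + 1))) •
          mul (star (Finsupp.single (x, al) 1) (Finsupp.single (z, cl) 1))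
            (Finsupp.single (y, bl) 1) :=
  star_right_derivation_of_loop_product_general Ab Cb degA degC pair hpair_deg mulA mul star hmul
    hstar
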